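/- arXiv:1602.06620 — 5 statements merged into one kernel-verified Lean document; each statement's English description precedes it below -/
import Mathlib

section
/- Let A be a real n×m matrix (n ≤ m) with all columns nonzero and no two columns scalar multiples of each other, and let H = ⋃_{i=1}^m {x ∈ ℝ^n : ⟨a_i, x⟩ = 0}. Then the map m : ℝ^n \ H → vert(Z(A)) defined by m(x) = A·sign(Aᵀx) is well defined and surjective onto the set of vertices of Z(A); i.e., every vertex v of Z(A) equals A·sign(Aᵀx) for some x ∈ ℝ^n with ⟨a_i, x⟩ ≠ 0 for all i. -/
/-!
For `x` off the hyperplanes, `y ↦ ⟨x, y⟩` attains its maximum `∑ |⟨aᵢ, x⟩|` on `Z(A)` only at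
`A · sign(Aᵀx)`, so this point is exposed, hence a vertex. Conversely, `Z(A)` is the convex hull of
the finitely many points `A s`, `s ∈ {±1}^m`, so a vertex is one of them, `A s`, and some `x`
strictly separates it from the others. Flipping the sign of `sᵢ` gives another such point
`A s - 2 sᵢ aᵢ ≠ A s`, and comparing the two values of `⟨x, ·⟩` shows `sᵢ ⟨aᵢ, x⟩ > 0`, i.e.
`sign(Aᵀx) = s`.
-/

open Matrix

/-- The zonotope generated by the columns of an `n × m` real matrix `A`. -/
def zonotope {n m : ℕ} (A : Matrix (Fin n) (Fin m) ℝ) : Set (Fin n → ℝ) :=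
  {v | ∃ x : Fin m → ℝ, (∀ i, x i ∈ Set.Icc (-1 : ℝ) 1) ∧ v = A.mulVec x}

/-- The sign vector `sign(Aᵀ x) ∈ {-1,1}^m` (entries are `Real.sign ⟨aᵢ, x⟩`). -/
noncomputable def signVec {n m : ℕ} (A : Matrix (Fin n) (Fin m) ℝ) (x : Fin n → ℝ) :
    Fin m → ℝ :=
  fun i => Real.sign (Aᵀ.mulVec x i)

namespace Real

lemma sign_mul_self_eq_abs (c : ℝ) : sign c * c = |c| := by
  rcases lt_trichotomy c 0 with hc | rfl | hc
  · rw [sign_of_neg hc, abs_of_neg hc]; ring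
  · simp
  · rw [sign_of_pos hc, abs_of_pos hc, one_mul]

lemma sign_mem_Icc (c : ℝ) : sign c ∈ Set.Icc (-1 : ℝ) 1 := by
  rcases sign_apply_eq c with h | h | h <;> rw [h] <;> norm_num

lemma mul_le_abs_of_mem_Icc {u : ℝ} (hu : u ∈ Set.Icc (-1 : ℝ) 1) (c : ℝ) : u * c ≤ |c| :=
  calc u * c ≤ |u| * |c| := by rw [← abs_mul]; exact le_abs_self _
    _ ≤ |c| := mul_le_of_le_one_left (abs_nonneg c) (abs_le.2 hu)

lemma eq_sign_of_mul_eq_abs {u c : ℝ} (hc : c ≠ 0) (h : u * c = |c|) : u = sign c := by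
  rw [← sign_mul_self_eq_abs] at h
  exact mul_right_cancel₀ hc h

lemma sign_eq_of_pos_mul {s c : ℝ} (hs : s = -1 ∨ s = 1) (h : 0 < s * c) : sign c = s := by
  rcases hs with rfl | rfl
  · exact sign_of_neg (by linarith)
  · exact sign_of_pos (by linarith)

end Real

section Cube

variable {ι : Type*} [Fintype ι]

lemma dotProduct_le_sum_abs {u : ι → ℝ} (hu : ∀ i, u i ∈ Set.Icc (-1 : ℝ) 1) (c : ι → ℝ) :
    u ⬝ᵥ c ≤ ∑ i, |c i| :=
  Finset.sum_le_sum fun i _ => Real.mul_le_abs_of_mem_Icc (hu i) (c i)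

lemma eq_sign_of_dotProduct_eq_sum_abs {u c : ι → ℝ} (hu : ∀ i, u i ∈ Set.Icc (-1 : ℝ) 1)
    (hc : ∀ i, c i ≠ 0) (h : u ⬝ᵥ c = ∑ i, |c i|) : u = fun i => Real.sign (c i) := by
  have hterm := (Finset.sum_eq_sum_iff_of_le fun i _ => Real.mul_le_abs_of_mem_Icc (hu i) (c i)).1 h
  exact funext fun i => Real.eq_sign_of_mul_eq_abs (hc i) (hterm i (Finset.mem_univ i))

lemma convexHull_pi_pair_eq_cube :
    convexHull ℝ (Set.univ.pi fun _ : ι => ({-1, 1} : Set ℝ)) =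
      Set.univ.pi fun _ => Set.Icc (-1) 1 := by
  rw [convexHull_pi]
  simp only [convexHull_pair, segment_eq_Icc (by norm_num : (-1 : ℝ) ≤ 1)]

lemma exists_dotProduct_lt_of_notMem_convexHull {s : Set (ι → ℝ)} {x : ι → ℝ}
    (hs : s.Finite) (hx : x ∉ convexHull ℝ s) : ∃ y : ι → ℝ, ∀ w ∈ s, y ⬝ᵥ w < y ⬝ᵥ x := by
  classical
  obtain ⟨f, r, hfs, hfx⟩ := geometric_hahn_banach_closed_point (convex_convexHull ℝ s)
    (hs.isCompact_convexHull (𝕜 := ℝ)).isClosed hx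
  refine ⟨(dotProductEquiv ℝ ι).symm f.toLinearMap, fun w hw => ?_⟩
  have hf : ∀ z, (dotProductEquiv ℝ ι).symm f.toLinearMap ⬝ᵥ z = f z := fun z =>
    LinearMap.congr_fun ((dotProductEquiv ℝ ι).apply_symm_apply f.toLinearMap) z
  rw [hf, hf]
  exact (hfs w (subset_convexHull ℝ s hw)).trans hfx

end Cube

section SignVectors

variable {ι : Type*} [DecidableEq ι]

lemma update_neg_mem_pi_pair {s : ι → ℝ} (hs : s ∈ Set.univ.pi fun _ => ({-1, 1} : Set ℝ))
    (i : ι) : Function.update s i (-s i) ∈ Set.univ.pi fun _ => ({-1, 1} : Set ℝ) := by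
  intro j _
  have hsj := hs j trivial
  simp only [Set.mem_insert_iff, Set.mem_singleton_iff] at hsj ⊢
  rcases eq_or_ne j i with rfl | hji
  · rcases hsj with h | h <;> simp [h]
  · simpa [hji] using hsj

lemma sub_update_neg (s : ι → ℝ) (i : ι) :
    s - Function.update s i (-s i) = Pi.single i (2 * s i) := by
  ext j
  rcases eq_or_ne j i with rfl | hji
  · simp; ring
  · simp [hji]

end SignVectors

section Zonotope

variable {n m : ℕ} (A : Matrix (Fin n) (Fin m) ℝ)

lemma dotProduct_mulVec_eq (x : Fin n → ℝ) (u : Fin m → ℝ) :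
    x ⬝ᵥ A *ᵥ u = u ⬝ᵥ Aᵀ *ᵥ x := by
  rw [dotProduct_mulVec, ← mulVec_transpose, dotProduct_comm]

lemma zonotope_eq_convexHull :
    zonotope A = convexHull ℝ (A.mulVec '' Set.univ.pi fun _ => {-1, 1}) := by
  rw [← Matrix.coe_mulVecLin, ← LinearMap.image_convexHull, Matrix.coe_mulVecLin,
    convexHull_pi_pair_eq_cube]
  ext v
  simp only [zonotope, Set.mem_ofPred_eq, Set.mem_image, Set.mem_univ_pi, eq_comm]

lemma mulVec_sub_mulVec_update_neg (s : Fin m → ℝ) (i : Fin m) :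
    A *ᵥ s - A *ᵥ Function.update s i (-s i) = (2 * s i) • fun j => A j i := by
  rw [← mulVec_sub, sub_update_neg, mulVec_single]
  ext j
  simp [mul_comm]

theorem mulVec_signVec_mem_exposedPoints {x : Fin n → ℝ} (hx : ∀ i, (Aᵀ *ᵥ x) i ≠ 0) :
    A *ᵥ signVec A x ∈ (zonotope A).exposedPoints ℝ := by
  have hmax : x ⬝ᵥ A *ᵥ signVec A x = ∑ i, |(Aᵀ *ᵥ x) i| := by
    rw [dotProduct_mulVec_eq]
    exact Finset.sum_congr rfl fun i _ => Real.sign_mul_self_eq_abs _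
  refine ⟨⟨signVec A x, fun i => Real.sign_mem_Icc _, rfl⟩,
    LinearMap.toContinuousLinearMap (dotProductEquiv ℝ (Fin n) x), ?_⟩
  rintro _ ⟨u, hu, rfl⟩
  simp only [LinearMap.coe_toContinuousLinearMap', dotProductEquiv_apply_apply]
  rw [hmax, dotProduct_mulVec_eq]
  refine ⟨dotProduct_le_sum_abs hu _, fun h => ?_⟩
  rw [eq_sign_of_dotProduct_eq_sum_abs hu hx (le_antisymm (dotProduct_le_sum_abs hu _) h)]
  rfl

theorem exists_signVec_eq_of_mem_extremePoints (hcol : ∀ i, (fun j => A j i) ≠ 0) {v : Fin n → ℝ}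
    (hv : v ∈ (zonotope A).extremePoints ℝ) :
    ∃ x : Fin n → ℝ, (∀ i, (Aᵀ *ᵥ x) i ≠ 0) ∧ A *ᵥ signVec A x = v := by
  set F := A.mulVec '' Set.univ.pi fun _ => ({-1, 1} : Set ℝ)
  rw [zonotope_eq_convexHull] at hv
  obtain ⟨s, hs, rfl⟩ := extremePoints_convexHull_subset hv
  have hisolated : A *ᵥ s ∉ convexHull ℝ (F \ {A *ᵥ s}) := fun h =>
    ((convex_convexHull ℝ F).mem_extremePoints_iff_mem_sdiff_convexHull_sdiff.1 hv).2
      (convexHull_mono (Set.sdiff_subset_sdiff_left (subset_convexHull ℝ F)) h)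
  obtain ⟨x, hx⟩ := exists_dotProduct_lt_of_notMem_convexHull
    ((Set.Finite.pi fun _ => (Set.finite_singleton _).insert _).image _).sdiff hisolated
  have key : ∀ i, 0 < s i * (Aᵀ *ᵥ x) i := by
    intro i
    have hsi : s i = -1 ∨ s i = 1 := hs i trivial
    have h2 : 2 * s i ≠ 0 := by rcases hsi with h | h <;> norm_num [h]
    have hne : A *ᵥ Function.update s i (-s i) ≠ A *ᵥ s := fun h => by
      have hzero := mulVec_sub_mulVec_update_neg A s i
      rw [h, sub_self, eq_comm, smul_eq_zero] at hzero
      exact hzero.elim h2 (hcol i)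
    have hlt := hx _ ⟨⟨_, update_neg_mem_pi_pair hs i, rfl⟩, hne⟩
    have hgap := congrArg (x ⬝ᵥ ·) (mulVec_sub_mulVec_update_neg A s i)
    simp only [dotProduct_sub, dotProduct_smul, smul_eq_mul] at hgap
    have hcol_dot : x ⬝ᵥ (fun j => A j i) = (Aᵀ *ᵥ x) i := dotProduct_comm _ _
    rw [hcol_dot] at hgap
    linarith
  refine ⟨x, fun i h => by simpa [h] using key i, congrArg _ (funext fun i => ?_)⟩
  exact Real.sign_eq_of_pos_mul (hs i trivial) (key i)

end Zonotope

theorem sign_map_wellDefined_and_onto_general (n m : ℕ)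
    (A : Matrix (Fin n) (Fin m) ℝ)
    (hcol : ∀ i, (fun j => A j i) ≠ 0) :
    (∀ x : Fin n → ℝ, (∀ i, Aᵀ.mulVec x i ≠ 0) →
        A.mulVec (signVec A x) ∈ (zonotope A).extremePoints ℝ) ∧
      (∀ v ∈ (zonotope A).extremePoints ℝ, ∃ x : Fin n → ℝ,
        (∀ i, Aᵀ.mulVec x i ≠ 0) ∧ A.mulVec (signVec A x) = v) :=
  ⟨fun _ hx => exposedPoints_subset_extremePoints (mulVec_signVec_mem_exposedPoints A hx),
    fun _ hv => exists_signVec_eq_of_mem_extremePoints A hcol hv⟩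

/-- The mapping `x ↦ A · sign(Aᵀ x)`, defined away from the union `H` of hyperplanes
orthogonal to the columns of `A`, is well defined into the vertex set of `Z(A)` and is
onto: every vertex of `Z(A)` equals `A · sign(Aᵀ x)` for some `x` with `⟨aᵢ, x⟩ ≠ 0`
for all `i`. -/
theorem sign_map_wellDefined_and_onto (n m : ℕ) (hnm : n ≤ m)
    (A : Matrix (Fin n) (Fin m) ℝ)
    (hcol : ∀ i, (fun j => A j i) ≠ 0)
    (hpair : ∀ i i', i ≠ i' → ∀ c : ℝ, (fun j => A j i) ≠ c • fun j => A j i') :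
    (∀ x : Fin n → ℝ, (∀ i, Aᵀ.mulVec x i ≠ 0) →
        A.mulVec (signVec A x) ∈ (zonotope A).extremePoints ℝ) ∧
      (∀ v ∈ (zonotope A).extremePoints ℝ, ∃ x : Fin n → ℝ,
        (∀ i, Aᵀ.mulVec x i ≠ 0) ∧ A.mulVec (signVec A x) = v) :=
  sign_map_wellDefined_and_onto_general n m A hcol
end

section
/- Let K ⊂ ℝ^n be a polytope (the convex hull of a finite set) and let v be an extreme point of K. Then the topological interior of the normal cone N_K(v) equals the set S(v) = {x ∈ ℝ^n : ⟨x, z − v⟩ < 0 for all z ∈ K with z ≠ v}. -/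
open Matrix Filter Topology

/-- The normal cone of a set `K ⊆ ℝⁿ` at a point `v`. -/
def normalCone {n : ℕ} (K : Set (Fin n → ℝ)) (v : Fin n → ℝ) : Set (Fin n → ℝ) :=
  {x | ∀ z ∈ K, x ⬝ᵥ (z - v) ≤ 0}

/-- The set `S(v)` of the paper. -/
def strictNormalCone {n : ℕ} (K : Set (Fin n → ℝ)) (v : Fin n → ℝ) : Set (Fin n → ℝ) :=
  {x | ∀ z ∈ K, z ≠ v → x ⬝ᵥ (z - v) < 0}

section

variable {n : ℕ} {K : Set (Fin n → ℝ)} {v : Fin n → ℝ}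

theorem normalCone_anti {L : Set (Fin n → ℝ)} (h : K ⊆ L) : normalCone L v ⊆ normalCone K v :=
  fun _ hx z hz => hx z (h hz)

theorem strictNormalCone_anti {L : Set (Fin n → ℝ)} (h : K ⊆ L) :
    strictNormalCone L v ⊆ strictNormalCone K v :=
  fun _ hx z hz => hx z (h hz)

theorem strictNormalCone_subset_normalCone : strictNormalCone K v ⊆ normalCone K v := by
  intro x hx z hz
  rcases eq_or_ne z v with rfl | hzv
  · simp
  · exact (hx z hz hzv).le

theorem convex_setOf_dotProduct_sub_nonpos (x v : Fin n → ℝ) :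
    Convex ℝ {z : Fin n → ℝ | x ⬝ᵥ (z - v) ≤ 0} := by
  simp only [dotProduct_sub, sub_nonpos]
  exact convex_halfSpace_le ⟨dotProduct_add x, fun c z => dotProduct_smul c x z⟩ _

@[simp]
theorem normalCone_convexHull (S : Set (Fin n → ℝ)) (v : Fin n → ℝ) :
    normalCone (convexHull ℝ S) v = normalCone S v := by
  refine (normalCone_anti (subset_convexHull ℝ S)).antisymm fun x hx z hz => ?_
  exact convexHull_min (fun s hs => hx s hs) (convex_setOf_dotProduct_sub_nonpos x v) hz

theorem Set.Finite.isOpen_strictNormalCone {S : Set (Fin n → ℝ)} (hS : S.Finite) :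
    IsOpen (strictNormalCone S v) := by
  have : strictNormalCone S v = ⋂ s ∈ S \ {v}, {x | x ⬝ᵥ (s - v) < 0} := by
    ext x
    simp [strictNormalCone, and_imp]
  rw [this]
  exact hS.sdiff.isOpen_biInter fun s _ =>
    isOpen_lt (continuous_id.dotProduct continuous_const) continuous_const

/-- Pushing an interior point `x` of the normal cone a little further in a direction
`z - v` with `x ⬝ᵥ (z - v) = 0` would leave the cone. -/
theorem interior_normalCone_subset_strictNormalCone :
    interior (normalCone K v) ⊆ strictNormalCone K v := by
  intro x hx z hz hzv
  set d := z - v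
  have hdd : 0 < d ⬝ᵥ d := by
    simpa only [star_trivial] using dotProduct_star_self_pos_iff.2 (sub_ne_zero.2 hzv)
  have hcont : Continuous fun t : ℝ => x + t • d := by fun_prop
  have hpath : Tendsto (fun t : ℝ => x + t • d) (𝓝[>] 0) (𝓝 x) := by
    simpa using (hcont.tendsto 0).mono_left nhdsWithin_le_nhds
  obtain ⟨t, hN, ht⟩ :=
    ((hpath.eventually (mem_interior_iff_mem_nhds.1 hx)).and self_mem_nhdsWithin).exists
  have hle : x ⬝ᵥ d + t * (d ⬝ᵥ d) ≤ 0 := by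
    simpa only [add_dotProduct, smul_dotProduct, smul_eq_mul] using hN z hz
  have hx0 : x ⬝ᵥ d ≤ 0 := interior_subset hx z hz
  linarith [mul_pos (show (0 : ℝ) < t from ht) hdd]

end

theorem interior_normalCone_eq_general (n : ℕ) (S : Set (Fin n → ℝ)) (hS : S.Finite)
    (K : Set (Fin n → ℝ)) (hK : K = convexHull ℝ S)
    (v : Fin n → ℝ) :
    interior (normalCone K v) =
      {x : Fin n → ℝ | ∀ z ∈ K, z ≠ v → x ⬝ᵥ (z - v) < 0} := by
  subst hK
  refine interior_normalCone_subset_strictNormalCone.antisymm fun x hx => ?_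
  have hxS : x ∈ strictNormalCone S v := strictNormalCone_anti (subset_convexHull ℝ S) hx
  refine interior_maximal ?_ hS.isOpen_strictNormalCone hxS
  rw [normalCone_convexHull]
  exact strictNormalCone_subset_normalCone

/-- For a polytope `K` (convex hull of a finite set) and an extreme point `v` of `K`,
the topological interior of the normal cone at `v` is the set of directions making
strict angles with `z - v` for all `z ∈ K`, `z ≠ v`. -/
theorem interior_normalCone_eq (n : ℕ) (S : Set (Fin n → ℝ)) (hS : S.Finite)
    (K : Set (Fin n → ℝ)) (hK : K = convexHull ℝ S)
    (v : Fin n → ℝ) (hv : v ∈ K.extremePoints ℝ) :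
    interior (normalCone K v) =
      {x : Fin n → ℝ | ∀ z ∈ K, z ≠ v → x ⬝ᵥ (z - v) < 0} :=
  interior_normalCone_eq_general n S hS K hK v
end

section
/- Let A be a real n×m matrix (n ≤ m) with all columns nonzero and no two columns scalar multiples of each other, and let v be a vertex of the zonotope Z(A). Then the preimage of v under the map m(x) = A·sign(Aᵀx) equals the interior of the normal cone of Z(A) at v; i.e., for x ∈ ℝ^n: x lies in the interior of N_{Z(A)}(v) if and only if ⟨a_i, x⟩ ≠ 0 for all i and A·sign(Aᵀx) = v. -/
open Matrix

lemma sign_mul_self' (t : ℝ) : Real.sign t * t = |t| := by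
  rcases lt_trichotomy t 0 with h|h|h
  · rw [Real.sign_of_neg h, abs_of_neg h]; ring
  · simp [h]
  · rw [Real.sign_of_pos h, abs_of_pos h]; ring

lemma sign_mem_Icc (t : ℝ) : Real.sign t ∈ Set.Icc (-1:ℝ) 1 := by
  rcases lt_trichotomy t 0 with h|h|h
  · rw [Real.sign_of_neg h]; constructor <;> norm_num
  · simp [h]
  · rw [Real.sign_of_pos h]; constructor <;> norm_num

lemma dotmv {n m : ℕ} (A : Matrix (Fin n) (Fin m) ℝ) (x : Fin n → ℝ) (c : Fin m → ℝ) :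
    x ⬝ᵥ A.mulVec c = ∑ i, c i * Aᵀ.mulVec x i := by
  simp only [dotProduct, mulVec, transpose_apply, Finset.mul_sum]
  rw [Finset.sum_comm]
  apply Finset.sum_congr rfl; intro i _
  apply Finset.sum_congr rfl; intro j _
  ring

lemma mulVec_cont {n m : ℕ} (A : Matrix (Fin n) (Fin m) ℝ) (i : Fin m) :
    Continuous fun y : Fin n → ℝ => Aᵀ.mulVec y i := by
  simp only [mulVec, dotProduct]
  exact continuous_finset_sum _ fun j _ => continuous_const.mul (continuous_apply j)

/-- For a vertex `v` of the zonotope `Z(A)`, the preimage of `v` under the map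
`x ↦ A · sign(Aᵀ x)` is exactly the interior of the normal cone of `Z(A)` at `v`. -/
theorem preimage_eq_interior_normalCone (n m : ℕ) (hnm : n ≤ m)
    (A : Matrix (Fin n) (Fin m) ℝ)
    (hcol : ∀ i, (fun j => A j i) ≠ 0)
    (hpair : ∀ i i', i ≠ i' → ∀ c : ℝ, (fun j => A j i) ≠ c • fun j => A j i')
    (v : Fin n → ℝ) (hv : v ∈ (zonotope A).extremePoints ℝ) (x : Fin n → ℝ) :
    x ∈ interior (normalCone (zonotope A) v) ↔
      (∀ i, Aᵀ.mulVec x i ≠ 0) ∧ A.mulVec (signVec A x) = v := by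
  obtain ⟨c, hc, hvc⟩ := hv.1
  have hsq : ∀ i : Fin m, 0 < Aᵀ.mulVec (fun j => A j i) i := by
    intro i
    have h1 : Aᵀ.mulVec (fun j => A j i) i = ∑ j, A j i * A j i := by
      simp [mulVec, dotProduct, transpose_apply]
    rw [h1]
    have hex : ∃ j, A j i ≠ 0 := by
      by_contra h; push_neg at h; exact hcol i (funext h)
    obtain ⟨j, hj⟩ := hex
    exact Finset.sum_pos' (fun k _ => mul_self_nonneg _)
      ⟨j, Finset.mem_univ j, mul_self_pos.mpr hj⟩
  constructor
  · intro hx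
    have hxN : x ∈ normalCone (zonotope A) v := interior_subset hx
    have hne : ∀ i, Aᵀ.mulVec x i ≠ 0 := by
      intro i hzero
      obtain ⟨ε, hε, hball⟩ := Metric.mem_nhds_iff.mp (mem_interior_iff_mem_nhds.mp hx)
      set t : ℝ := if c i ≤ 0 then 1 - c i else -1 - c i with ht
      have hci := hc i
      have ht0 : t ≠ 0 := by
        rcases le_or_gt (c i) 0 with h|h
        · simp only [ht, if_pos h]; intro hh; linarith
        · simp only [ht, if_neg (not_le.mpr h)]; intro hh; linarith
      have hct : c i + t ∈ Set.Icc (-1:ℝ) 1 := by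
        rcases le_or_gt (c i) 0 with h|h
        · simp only [ht, if_pos h]
          constructor <;> [norm_num; norm_num]
        · simp only [ht, if_neg (not_le.mpr h)]
          constructor <;> [norm_num; linarith]
      set c' : Fin m → ℝ := fun k => if k = i then c i + t else c k with hc'
      have hz : A.mulVec c' ∈ zonotope A := by
        refine ⟨c', fun k => ?_, rfl⟩
        by_cases hk : k = i
        · simpa [hc', hk] using hct
        · simpa [hc', hk] using hc k
      set a : Fin n → ℝ := fun j => A j i with ha
      set δ : ℝ := ε / (2 * (‖t • a‖ + 1)) with hδ
      have hna : (0:ℝ) < ‖t • a‖ + 1 := by positivity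
      have hδ0 : 0 < δ := by positivity
      set x' : Fin n → ℝ := x + δ • (t • a) with hx'
      have hx'mem : x' ∈ normalCone (zonotope A) v := by
        apply hball
        rw [Metric.mem_ball, dist_eq_norm]
        have : x' - x = δ • (t • a) := by rw [hx']; abel
        rw [this, norm_smul, Real.norm_eq_abs, abs_of_pos hδ0]
        have hkey : δ * (‖t • a‖ + 1) = ε / 2 := by
          rw [hδ]; field_simp
        nlinarith [norm_nonneg (t • a)]
      have hle := hx'mem _ hz
      have hsub : A.mulVec c' - v = A.mulVec (c' - c) := by
        rw [hvc, Matrix.mulVec_sub]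
      rw [hsub, dotmv] at hle
      have hsum : ∑ k, (c' - c) k * Aᵀ.mulVec x' k = t * Aᵀ.mulVec x' i := by
        rw [Finset.sum_eq_single i]
        · simp [hc']
        · intro k _ hk; simp [hc', hk]
        · intro h; exact absurd (Finset.mem_univ i) h
      rw [hsum] at hle
      have hlin : Aᵀ.mulVec x' i = Aᵀ.mulVec x i + δ * (t * Aᵀ.mulVec a i) := by
        rw [hx', Matrix.mulVec_add, Matrix.mulVec_smul, Matrix.mulVec_smul]
        simp [mul_assoc]
      rw [hlin, hzero, zero_add] at hle
      have hS : 0 < Aᵀ.mulVec a i := hsq i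
      have ht2 : 0 < t * t := mul_self_pos.mpr ht0
      nlinarith [mul_pos (mul_pos hδ0 ht2) hS]
    refine ⟨hne, ?_⟩
    have hz0 : A.mulVec (signVec A x) ∈ zonotope A :=
      ⟨signVec A x, fun i => sign_mem_Icc _, rfl⟩
    have h1 := hxN _ hz0
    rw [dotProduct_sub, sub_nonpos, dotmv, hvc, dotmv] at h1
    have h2 : ∀ k ∈ Finset.univ, c k * Aᵀ.mulVec x k ≤ signVec A x k * Aᵀ.mulVec x k := by
      intro k _
      rw [signVec, sign_mul_self']
      calc c k * Aᵀ.mulVec x k ≤ |c k * Aᵀ.mulVec x k| := le_abs_self _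
        _ = |c k| * |Aᵀ.mulVec x k| := abs_mul _ _
        _ ≤ 1 * |Aᵀ.mulVec x k| := by
            apply mul_le_mul_of_nonneg_right _ (abs_nonneg _)
            exact abs_le.mpr ⟨(hc k).1, (hc k).2⟩
        _ = |Aᵀ.mulVec x k| := one_mul _
    have hsumeq : ∑ k, signVec A x k * Aᵀ.mulVec x k = ∑ k, c k * Aᵀ.mulVec x k :=
      le_antisymm h1 (Finset.sum_le_sum h2)
    have heach : ∀ k ∈ Finset.univ,
        signVec A x k * Aᵀ.mulVec x k - c k * Aᵀ.mulVec x k = 0 := by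
      rw [← Finset.sum_eq_zero_iff_of_nonneg]
      · rw [Finset.sum_sub_distrib, hsumeq, sub_self]
      · intro k _; have := h2 k (Finset.mem_univ k); linarith
    have hcs : c = signVec A x := by
      funext k
      have hk := heach k (Finset.mem_univ k)
      have hk' : signVec A x k * Aᵀ.mulVec x k = c k * Aᵀ.mulVec x k := by linarith
      exact (mul_right_cancel₀ (hne k) hk'.symm)
    rw [hvc, hcs]
  · rintro ⟨hne, heq⟩
    rw [mem_interior]
    refine ⟨{y | ∀ i, 0 < Aᵀ.mulVec y i * Aᵀ.mulVec x i}, ?_, ?_, ?_⟩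
    · intro y hy z hzZ
      obtain ⟨d, hd, rfl⟩ := hzZ
      have hsub : A.mulVec d - v = A.mulVec (d - signVec A x) := by
        rw [← heq, Matrix.mulVec_sub]
      rw [hsub, dotmv]
      apply Finset.sum_nonpos
      intro i _
      have hyi := hy i
      simp only [Pi.sub_apply]
      rcases lt_or_gt_of_ne (hne i) with h|h
      · have hy' : Aᵀ.mulVec y i < 0 := by nlinarith
        have hs : signVec A x i = -1 := by rw [signVec, Real.sign_of_neg h]
        rw [hs]
        nlinarith [(hd i).1]
      · have hy' : 0 < Aᵀ.mulVec y i := by nlinarith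
        have hs : signVec A x i = 1 := by rw [signVec, Real.sign_of_pos h]
        rw [hs]
        nlinarith [(hd i).2]
    · have hrw : {y : Fin n → ℝ | ∀ i, 0 < Aᵀ.mulVec y i * Aᵀ.mulVec x i} =
          ⋂ i, (fun y : Fin n → ℝ => Aᵀ.mulVec y i * Aᵀ.mulVec x i) ⁻¹' Set.Ioi 0 := by
        ext y; simp [Set.mem_iInter]
      rw [hrw]
      exact isOpen_iInter_of_finite fun i =>
        IsOpen.preimage ((mulVec_cont A i).mul continuous_const) isOpen_Ioi
    · intro i
      exact mul_self_pos.mpr (hne i)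
end

section
/- Let K ⊂ ℝ^n be a polytope with at least two extreme points and let v be an extreme point of K. Then the simplicial constant α_K(v) = inf{‖v − x‖₂ : x ∈ conv(vert(K) \ {v})} equals the Hausdorff distance between K and conv(vert(K) \ {v}). -/
/-!
Write `Q` for the convex hull of the extreme points other than `v`, so that `K = conv ({v} ∪ Q)`
and every `x ∈ K` lies on a segment `[v, q]` with `q ∈ Q`. The homothety centred at `q` that
sends `v` to `x` maps `Q` into itself (by convexity) and contracts distances, so
`dist(x, Q) ≤ dist(v, Q)`. As `Q ⊆ K`, the Hausdorff distance is the supremum of `dist(x, Q)` over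
`x ∈ K`, and it is attained at `x = v`.
-/

/-- The simplicial constant of a vertex `v` of a polytope `K`: the (Euclidean) distance
from `v` to the convex hull of the remaining extreme points. -/
noncomputable def simplicialConst {n : ℕ} (K : Set (EuclideanSpace ℝ (Fin n)))
    (v : EuclideanSpace ℝ (Fin n)) : ℝ :=
  Metric.infDist v (convexHull ℝ (K.extremePoints ℝ \ {v}))

open Metric Set

section NormedSpace

variable {E : Type*} [NormedAddCommGroup E] [NormedSpace ℝ E]

theorem Convex.infDist_le_of_mem_segment {Q : Set E} (hQ : Convex ℝ Q) {v q x : E} (hq : q ∈ Q)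
    (hx : x ∈ segment ℝ v q) : infDist x Q ≤ infDist v Q := by
  obtain ⟨a, b, ha, hb, hab, rfl⟩ := hx
  refine (le_infDist ⟨q, hq⟩).2 fun w hw => ?_
  calc infDist (a • v + b • q) Q ≤ dist (a • v + b • q) (a • w + b • q) :=
        infDist_le_dist_of_mem (hQ hw hq ha hb hab)
    _ = a * dist v w := by rw [dist_add_right, dist_smul₀, Real.norm_of_nonneg ha]
    _ ≤ dist v w := mul_le_of_le_one_left dist_nonneg (by linarith)

theorem hausdorffDist_convexHull_insert {A : Set E} (hA : A.Nonempty) (hA' : Bornology.IsBounded A)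
    (v : E) : hausdorffDist (convexHull ℝ (insert v A)) (convexHull ℝ A) =
      infDist v (convexHull ℝ A) := by
  have hsub : convexHull ℝ A ⊆ convexHull ℝ (insert v A) := convexHull_mono (subset_insert v A)
  refine le_antisymm (hausdorffDist_le_of_infDist infDist_nonneg (fun x hx => ?_)
    fun x hx => (infDist_zero_of_mem (hsub hx)).trans_le infDist_nonneg) ?_
  · rw [convexHull_insert hA, convexJoin_singleton_left, mem_iUnion₂] at hx
    obtain ⟨q, hq, hx⟩ := hx
    exact (convex_convexHull ℝ A).infDist_le_of_mem_segment hq hx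
  · refine infDist_le_hausdorffDist_of_mem (subset_convexHull ℝ _ (mem_insert v A)) ?_
    exact hausdorffEDist_ne_top_of_nonempty_of_bounded (hA.convexHull.mono hsub) hA.convexHull
      (isBounded_convexHull.2 (hA'.insert v)) (isBounded_convexHull.2 hA')

theorem Set.Finite.convexHull_extremePoints_convexHull {S : Set E} (hS : S.Finite) :
    convexHull ℝ ((convexHull ℝ S).extremePoints ℝ) = convexHull ℝ S := by
  have hclosed : IsClosed (convexHull ℝ ((convexHull ℝ S).extremePoints ℝ)) :=
    ((hS.subset (extremePoints_convexHull_subset (𝕜 := ℝ))).isCompact_convexHull ℝ).isClosed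
  rw [← hclosed.closure_eq]
  exact closure_convexHull_extremePoints (hS.isCompact_convexHull ℝ) (convex_convexHull ℝ S)

end NormedSpace

/-- For a polytope `K` with at least two extreme points and an extreme point `v` of
`K`, the simplicial constant of `v` equals the Hausdorff distance between `K` and the
convex hull of the remaining extreme points. -/
theorem simplicialConst_eq_hausdorffDist (n : ℕ) (S : Set (EuclideanSpace ℝ (Fin n)))
    (hS : S.Finite) (K : Set (EuclideanSpace ℝ (Fin n))) (hK : K = convexHull ℝ S)
    (hnt : (K.extremePoints ℝ).Nontrivial)
    (v : EuclideanSpace ℝ (Fin n)) (hv : v ∈ K.extremePoints ℝ) :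
    simplicialConst K v =
      Metric.hausdorffDist K (convexHull ℝ (K.extremePoints ℝ \ {v})) := by
  have hfin : (K.extremePoints ℝ).Finite := hS.subset (hK ▸ extremePoints_convexHull_subset)
  have hK_eq : convexHull ℝ (insert v (K.extremePoints ℝ \ {v})) = K := by
    rw [insert_sdiff_singleton, insert_eq_of_mem hv, hK, hS.convexHull_extremePoints_convexHull]
  obtain ⟨w, hw, hwv⟩ := hnt.exists_ne v
  have key := hausdorffDist_convexHull_insert (A := K.extremePoints ℝ \ {v}) ⟨w, hw, hwv⟩
    hfin.sdiff.isBounded v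
  rw [hK_eq] at key
  exact key.symm
end

section
/- Let S ⊂ ℝ^n be a finite set, K = conv(S), w ∈ S, K' = conv(S \ {w}), and let v ∈ S with v ≠ w. Then the normal cone of K' at v is contained in the union of the normal cones of K at v and at w: N_{K'}(v) ⊆ N_K(v) ∪ N_K(w). -/
open Matrix

lemma mem_normalCone_convexHull_iff {n : ℕ} (T : Set (Fin n → ℝ)) (v x : Fin n → ℝ) :
    x ∈ normalCone (convexHull ℝ T) v ↔ ∀ z ∈ T, x ⬝ᵥ (z - v) ≤ 0 := by
  constructor
  · intro h z hz
    exact h z (subset_convexHull ℝ T hz)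
  · intro h z hz
    have hconv : Convex ℝ {z : Fin n → ℝ | x ⬝ᵥ z ≤ x ⬝ᵥ v} := by
      exact convex_halfSpace_le (LinearMap.isLinear ⟨⟨fun z => x ⬝ᵥ z, fun a b => dotProduct_add x a b⟩, fun c a => by simp [dotProduct_smul]⟩) (x ⬝ᵥ v)
    have hsub : T ⊆ {z : Fin n → ℝ | x ⬝ᵥ z ≤ x ⬝ᵥ v} := by
      intro z hz
      have := h z hz
      simpa [dotProduct_sub, sub_nonpos] using this
    have := convexHull_min hsub hconv hz
    simpa [dotProduct_sub, sub_nonpos] using this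

/-- Removing a point `w` from the generating set enlarges the normal cone at `v` by at
most the normal cone at `w`: `N_{conv(S \ {w})}(v) ⊆ N_{conv S}(v) ∪ N_{conv S}(w)`. -/
theorem normalCone_erase_subset (n : ℕ) (S : Set (Fin n → ℝ)) (hS : S.Finite)
    (w : Fin n → ℝ) (hw : w ∈ S) (v : Fin n → ℝ) (hv : v ∈ S) (hvw : v ≠ w) :
    normalCone (convexHull ℝ (S \ {w})) v ⊆
      normalCone (convexHull ℝ S) v ∪ normalCone (convexHull ℝ S) w := by
  intro x hx
  rw [mem_normalCone_convexHull_iff] at hx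
  by_cases hcase : x ⬝ᵥ (w - v) ≤ 0
  · left
    rw [mem_normalCone_convexHull_iff]
    intro z hz
    by_cases hzw : z = w
    · subst hzw; exact hcase
    · exact hx z ⟨hz, hzw⟩
  · right
    rw [mem_normalCone_convexHull_iff]
    push_neg at hcase
    intro z hz
    by_cases hzw : z = w
    · subst hzw; simp
    · have h1 : x ⬝ᵥ (z - v) ≤ 0 := hx z ⟨hz, hzw⟩
      have : x ⬝ᵥ (z - w) = x ⬝ᵥ (z - v) - x ⬝ᵥ (w - v) := by
        rw [dotProduct_sub, dotProduct_sub, dotProduct_sub]; ring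
      rw [this]
      linarith
end
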